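/- Let μ and ν be Borel probability measures on the unit sphere S of ℂⁿ and let ε > 0. Then there exist finitely supported probability measures μ' and ν' on S, supported on a common finite set of unit vectors, such that d_TR(Λ(μ'), Λ(μ)) ≤ ε, d_TR(Λ(ν'), Λ(ν)) ≤ ε, and D_KL(μ'‖ν') ≤ D_KL(μ‖ν). (The measures μ', ν' are obtained by pushing μ and ν forward along a Borel partition of S into sets of Fubini–Study diameter at most ε with one chosen representative point per set.) -/

import Mathlib

open MeasureTheory Matrix
open scoped ENNReal ComplexOrder Classical

noncomputable section

instance (n : ℕ) : MeasurableSpace (EuclideanSpace ℂ (Fin n)) := borel _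
instance (n : ℕ) : BorelSpace (EuclideanSpace ℂ (Fin n)) := ⟨rfl⟩

/-- `ℂⁿ` as a Euclidean (Hilbert) space. -/
abbrev Hn (n : ℕ) := EuclideanSpace ℂ (Fin n)

/-- The unit sphere of `ℂⁿ`, identified with the set of pure states. -/
abbrev Sph (n : ℕ) := Metric.sphere (0 : Hn n) 1

/-- The rank-one matrix `|ψ⟩⟨ψ| = ψ ψ†`. -/
def outer {n : ℕ} (ψ : Fin n → ℂ) : Matrix (Fin n) (Fin n) ℂ :=
  Matrix.of fun i j => ψ i * (starRingEnd ℂ) (ψ j)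

/-- The rank-one matrix `|x⟩⟨y| = x y†`. -/
def outer2 {n : ℕ} (x y : Fin n → ℂ) : Matrix (Fin n) (Fin n) ℂ :=
  Matrix.of fun i j => x i * (starRingEnd ℂ) (y j)

/-- The standard inner product on `ℂⁿ`, antilinear in the first argument. -/
def ip {n : ℕ} (x y : Fin n → ℂ) : ℂ := ∑ i, (starRingEnd ℂ) (x i) * y i

/-- The norm on `ℂⁿ` induced by `ip`. -/
def nrm {n : ℕ} (x : Fin n → ℂ) : ℝ := Real.sqrt (ip x x).re

/-- `Λ(μ) = ∫ |ψ⟩⟨ψ| dμ(ψ)`, defined entrywise. -/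
def Lambda {n : ℕ} (μ : Measure (Sph n)) : Matrix (Fin n) (Fin n) ℂ :=
  Matrix.of fun i j => ∫ ψ, ((ψ : Hn n) i * (starRingEnd ℂ) ((ψ : Hn n) j)) ∂μ

/-- Kullback–Leibler divergence `∫ log(dμ/dν) dμ` if `μ ≪ ν` (with value `⊤` if the
integral does not exist), and `⊤` otherwise. -/
def KLdiv {X : Type*} [MeasurableSpace X] (μ ν : Measure X) : EReal :=
  if μ ≪ ν ∧ Integrable (llr μ ν) μ then ((∫ x, llr μ ν x ∂μ : ℝ) : EReal) else ⊤

/-- The positive square root of a positive semidefinite matrix (junk value `0` otherwise). -/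
def msqrt {n : ℕ} (A : Matrix (Fin n) (Fin n) ℂ) : Matrix (Fin n) (Fin n) ℂ :=
  if h : A.PosSemidef then
    h.1.eigenvectorUnitary.1 * diagonal ((↑) ∘ Real.sqrt ∘ h.1.eigenvalues) *
      (star h.1.eigenvectorUnitary : Matrix (Fin n) (Fin n) ℂ) else 0

/-- `f` applied to a Hermitian matrix via the continuous functional calculus
(junk value `0` on non-Hermitian matrices). -/
def mcfc {n : ℕ} (f : ℝ → ℝ) (A : Matrix (Fin n) (Fin n) ℂ) : Matrix (Fin n) (Fin n) ℂ :=
  if h : A.IsHermitian then h.cfc f else 0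

/-- The matrix logarithm, via the continuous functional calculus. -/
def mlog {n : ℕ} (A : Matrix (Fin n) (Fin n) ℂ) : Matrix (Fin n) (Fin n) ℂ :=
  mcfc Real.log A

/-- The Belavkin–Staszewski relative entropy `Tr[ρ log(√ρ σ⁻¹ √ρ)]`. -/
def DBS {n : ℕ} (ρ σ : Matrix (Fin n) (Fin n) ℂ) : ℝ :=
  ((ρ * mlog (msqrt ρ * σ⁻¹ * msqrt ρ)).trace).re

/-- The trace distance `½ Tr[√((A−B)†(A−B))]`. -/
def traceDist {n : ℕ} (A B : Matrix (Fin n) (Fin n) ℂ) : ℝ :=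
  (1 / 2) * ((msqrt ((A - B)ᴴ * (A - B))).trace).re

/-- The Fubini–Study distance `arccos |⟨ψ, φ⟩|` between unit vectors. -/
def dFS {n : ℕ} (ψ φ : Hn n) : ℝ := Real.arccos ‖(inner ℂ ψ φ : ℂ)‖

/-- The (closed) support of a measure. -/
def msupport {X : Type*} [TopologicalSpace X] [MeasurableSpace X] (μ : Measure X) : Set X :=
  {x | ∀ U : Set X, IsOpen U → x ∈ U → μ U ≠ 0}

section aux

lemma integrable_dirac' {X : Type*} [MeasurableSpace X] {E : Type*} [NormedAddCommGroup E]
    (f : X → E) (hf : StronglyMeasurable f) (a : X) : Integrable f (Measure.dirac a) := by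
  refine ⟨hf.aestronglyMeasurable, ?_⟩
  rw [HasFiniteIntegral, lintegral_dirac' a hf.enorm]
  exact enorm_lt_top

lemma integrable_sum_smul_dirac {X : Type*} [MeasurableSpace X] {E : Type*}
    [NormedAddCommGroup E] {m : ℕ} (c : Fin m → ℝ≥0∞) (hc : ∀ j, c j ≠ ∞) (ψ : Fin m → X)
    (f : X → E) (hf : StronglyMeasurable f) :
    Integrable f (∑ j, c j • Measure.dirac (ψ j)) := by
  refine integrable_finset_sum_measure.2 fun j _ => ?_
  by_cases h0 : c j = 0
  · simp [h0]
  · exact (integrable_smul_measure h0 (hc j)).2 (integrable_dirac' f hf (ψ j))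

lemma integral_sum_smul_dirac {X : Type*} [MeasurableSpace X] {E : Type*}
    [NormedAddCommGroup E] [NormedSpace ℝ E] [CompleteSpace E] {m : ℕ} (c : Fin m → ℝ≥0∞) (hc : ∀ j, c j ≠ ∞)
    (ψ : Fin m → X) (f : X → E) (hf : StronglyMeasurable f) :
    ∫ x, f x ∂(∑ j, c j • Measure.dirac (ψ j)) = ∑ j, (c j).toReal • f (ψ j) := by
  rw [integral_finset_sum_measure (fun j _ => ?_)]
  · exact Finset.sum_congr rfl fun j _ => by
      rw [integral_smul_measure, integral_dirac' _ _ hf]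
  · by_cases h0 : c j = 0
    · simp [h0]
    · exact (integrable_smul_measure h0 (hc j)).2 (integrable_dirac' f hf (ψ j))

lemma sum_smul_dirac_apply {X : Type*} [MeasurableSpace X] [MeasurableSingletonClass X]
    {m : ℕ} (c : Fin m → ℝ≥0∞) (ψ : Fin m → X) (s : Set X) :
    (∑ j, c j • Measure.dirac (ψ j)) s = ∑ j, c j * (Measure.dirac (ψ j)) s := by
  rw [Measure.finset_sum_apply]
  exact Finset.sum_congr rfl fun j _ => by rw [Measure.smul_apply, smul_eq_mul]

lemma sum_smul_dirac_singleton {X : Type*} [MeasurableSpace X] [MeasurableSingletonClass X]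
    {m : ℕ} (c : Fin m → ℝ≥0∞) (ψ : Fin m → X) (hinj : Function.Injective ψ) (j : Fin m) :
    (∑ k, c k • Measure.dirac (ψ k)) {ψ j} = c j := by
  rw [sum_smul_dirac_apply]
  rw [Finset.sum_eq_single j]
  · simp [Measure.dirac_apply]
  · intro k _ hk
    have : ψ k ≠ ψ j := fun h => hk (hinj h)
    simp [Measure.dirac_apply, Set.indicator_apply, this]
  · simp

end aux

section tracelemmas

lemma trace_sqrt_le {n : ℕ} {M : Matrix (Fin n) (Fin n) ℂ} (hM : M.PosSemidef) (c : ℝ)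
    (hc : 0 ≤ c) (htr : M.trace.re ≤ c ^ 2) : (msqrt M).trace.re ≤ n * c := by
  have h1 : msqrt M = (hM.1.eigenvectorUnitary.1 * diagonal (((↑) : ℝ → ℂ) ∘ Real.sqrt ∘ hM.1.eigenvalues) *
      (star hM.1.eigenvectorUnitary : Matrix (Fin n) (Fin n) ℂ)) := dif_pos hM
  have hU : (star (hM.1.eigenvectorUnitary : Matrix (Fin n) (Fin n) ℂ)) *
      (hM.1.eigenvectorUnitary : Matrix (Fin n) (Fin n) ℂ) = 1 :=
    Matrix.mem_unitaryGroup_iff'.mp (hM.1.eigenvectorUnitary).2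
  have hsq : (hM.1.eigenvectorUnitary.1 * diagonal (((↑) : ℝ → ℂ) ∘ Real.sqrt ∘ hM.1.eigenvalues) *
      (star hM.1.eigenvectorUnitary : Matrix (Fin n) (Fin n) ℂ)).trace = ∑ i, (Real.sqrt (hM.1.eigenvalues i) : ℂ) := by
    rw [Matrix.trace_mul_cycle, hU, one_mul, Matrix.trace_diagonal]
    rfl
  have hMt : M.trace = ∑ i, (hM.1.eigenvalues i : ℂ) := by
    conv_lhs => rw [hM.1.spectral_theorem]
    rw [Unitary.conjStarAlgAut_apply, Matrix.trace_mul_cycle, hU, one_mul, Matrix.trace_diagonal]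
    rfl
  have hMt' : M.trace.re = ∑ i, hM.1.eigenvalues i := by
    rw [hMt]; simp
  have hev : ∀ i, hM.1.eigenvalues i ≤ c ^ 2 := by
    intro i
    calc hM.1.eigenvalues i ≤ ∑ j, hM.1.eigenvalues j :=
      Finset.single_le_sum (fun j _ => hM.eigenvalues_nonneg j) (Finset.mem_univ i)
    _ ≤ c ^ 2 := by rw [← hMt']; exact htr
  rw [h1, hsq]
  simp only [Complex.re_sum]
  calc (∑ i, (Real.sqrt (hM.1.eigenvalues i) : ℂ).re) ≤ ∑ _i : Fin n, c := by
        apply Finset.sum_le_sum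
        intro i _
        simp only [Complex.ofReal_re]
        calc Real.sqrt (hM.1.eigenvalues i) ≤ Real.sqrt (c ^ 2) :=
          Real.sqrt_le_sqrt (hev i)
        _ = c := by rw [Real.sqrt_sq hc]
    _ = n * c := by simp [Finset.sum_const, nsmul_eq_mul]

lemma traceDist_le_of_entry_bound {n : ℕ} (A B : Matrix (Fin n) (Fin n) ℂ) (c : ℝ)
    (hc : 0 ≤ c) (h : ∀ i j, ‖(A - B) i j‖ ≤ c) :
    traceDist A B ≤ n ^ 2 * c / 2 := by
  set Δ := A - B with hΔ
  have hPSD : ((A - B)ᴴ * (A - B)).PosSemidef := Matrix.posSemidef_conjTranspose_mul_self _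
  have htr : ((A - B)ᴴ * (A - B)).trace.re ≤ (n * c) ^ 2 := by
    have h2 : ((A - B)ᴴ * (A - B)).trace = ∑ i, ∑ k, (starRingEnd ℂ) (Δ k i) * Δ k i := by
      simp [Matrix.trace, Matrix.mul_apply, Matrix.diag, Matrix.conjTranspose_apply, hΔ]
    rw [h2]
    simp only [Complex.re_sum]
    have h3 : ∀ i k : Fin n, ((starRingEnd ℂ) (Δ k i) * Δ k i).re = ‖Δ k i‖ ^ 2 := by
      intro i k
      rw [← Complex.normSq_eq_norm_sq, ← Complex.normSq_eq_conj_mul_self]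
      simp [Complex.normSq_eq_norm_sq, ← Complex.ofReal_pow]
    calc (∑ i, ∑ k, ((starRingEnd ℂ) (Δ k i) * Δ k i).re)
        = ∑ i, ∑ k, ‖Δ k i‖ ^ 2 :=
          Finset.sum_congr rfl fun i _ => Finset.sum_congr rfl fun k _ => h3 i k
      _ ≤ ∑ _i : Fin n, ∑ _k : Fin n, c ^ 2 := by
          apply Finset.sum_le_sum; intro i _; apply Finset.sum_le_sum; intro k _
          exact pow_le_pow_left₀ (norm_nonneg _) (h k i) 2
      _ = ↑n ^ 2 * c ^ 2 := by simp [Finset.sum_const, nsmul_eq_mul]; ring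
      _ = (↑n * c) ^ 2 := by ring
  have hkey := trace_sqrt_le hPSD (n * c) (by positivity) htr
  rw [traceDist]
  nlinarith [hkey]

end tracelemmas

section klcell

variable {X : Type*} [MeasurableSpace X]

lemma cell_bound (μ ν : Measure X) [IsFiniteMeasure μ] [IsFiniteMeasure ν]
    (hμν : μ ≪ ν) (hint : Integrable (llr μ ν) μ) {E : Set X} (hE : MeasurableSet E)
    (ha : μ E ≠ 0) :
    (μ E).toReal * Real.log ((μ E).toReal / (ν E).toReal) ≤ ∫ x in E, llr μ ν x ∂μ := by
  have hb0 : ν E ≠ 0 := fun h => ha (hμν h)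
  have haT : μ E ≠ ∞ := measure_ne_top μ E
  have hbT : ν E ≠ ∞ := measure_ne_top ν E
  set a : ℝ := (μ E).toReal with hadef
  set b : ℝ := (ν E).toReal with hbdef
  have hapos : 0 < a := ENNReal.toReal_pos ha haT
  have hbpos : 0 < b := ENNReal.toReal_pos hb0 hbT
  set c : ℝ := a / b with hcdef
  have hcpos : 0 < c := div_pos hapos hbpos
  set f : X → ℝ := fun x => (μ.rnDeriv ν x).toReal with hfdef
  have hmeasf : Measurable f := (Measure.measurable_rnDeriv μ ν).ennreal_toReal
  have hae : ∀ᵐ x ∂μ, 0 < μ.rnDeriv ν x ∧ μ.rnDeriv ν x < ∞ := by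
    filter_upwards [Measure.rnDeriv_pos hμν, hμν.ae_le (Measure.rnDeriv_lt_top μ ν)] with x h1 h2
    exact ⟨h1, h2⟩
  -- integrability of f⁻¹ on E and the bound ∫_E f⁻¹ ≤ b
  have haeinv : ∀ᵐ x ∂μ, ENNReal.ofReal ((f x)⁻¹) = (μ.rnDeriv ν x)⁻¹ := by
    filter_upwards [hae] with x hx
    rw [hfdef]
    simp only
    rw [← ENNReal.toReal_inv, ENNReal.ofReal_toReal]
    exact ENNReal.inv_ne_top.2 hx.1.ne'
  have hlint : ∫⁻ x in E, (μ.rnDeriv ν x)⁻¹ ∂μ ≤ ν E := by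
    set g : X → ℝ≥0∞ := fun x => (μ.rnDeriv ν x)⁻¹ with hg
    have h0 : ∫⁻ x in E, g x ∂μ = ∫⁻ x in E, μ.rnDeriv ν x * g x ∂ν := by
      conv_lhs => rw [← Measure.withDensity_rnDeriv_eq μ ν hμν]
      exact setLIntegral_withDensity_eq_setLIntegral_mul ν (Measure.measurable_rnDeriv μ ν)
        (Measure.measurable_rnDeriv μ ν).inv hE
    rw [h0]
    calc ∫⁻ x in E, μ.rnDeriv ν x * g x ∂ν ≤ ∫⁻ _x in E, 1 ∂ν :=
          lintegral_mono fun x => ENNReal.mul_inv_le_one _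
      _ = ν E := by simp
  have hlint' : ∫⁻ x in E, ENNReal.ofReal ((f x)⁻¹) ∂μ ≤ ν E := by
    rw [setLIntegral_congr_fun_ae hE (haeinv.mono fun x hx _ => hx)]
    exact hlint
  have hinvint : IntegrableOn (fun x => (f x)⁻¹) E μ := by
    refine ⟨(hmeasf.inv.stronglyMeasurable).aestronglyMeasurable, ?_⟩
    rw [HasFiniteIntegral]
    calc ∫⁻ x in E, ‖(f x)⁻¹‖ₑ ∂μ = ∫⁻ x in E, ENNReal.ofReal ((f x)⁻¹) ∂μ := by
          apply lintegral_congr fun x => ?_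
          rw [← Real.enorm_eq_ofReal (inv_nonneg.2 ENNReal.toReal_nonneg)]
      _ ≤ ν E := hlint'
      _ < ∞ := hbT.lt_top
  have hinvle : ∫ x in E, (f x)⁻¹ ∂μ ≤ b := by
    have h1 : ∫ x in E, (f x)⁻¹ ∂μ = (∫⁻ x in E, ENNReal.ofReal ((f x)⁻¹) ∂μ).toReal := by
      rw [integral_eq_lintegral_of_nonneg_ae (f := fun x => (f x)⁻¹) (Filter.Eventually.of_forall fun x => inv_nonneg.2 ENNReal.toReal_nonneg)
        (hmeasf.inv.stronglyMeasurable).aestronglyMeasurable]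
    rw [h1, hbdef]
    exact ENNReal.toReal_mono hbT hlint'
  -- pointwise bound
  have hpt : ∀ᵐ x ∂μ, Real.log c + 1 - c * (f x)⁻¹ ≤ llr μ ν x := by
    filter_upwards [hae] with x hx
    have hfx : 0 < f x := ENNReal.toReal_pos hx.1.ne' hx.2.ne
    have h2 : Real.log (c / f x) ≤ c / f x - 1 :=
      Real.log_le_sub_one_of_pos (by positivity)
    rw [Real.log_div hcpos.ne' hfx.ne'] at h2
    have : llr μ ν x = Real.log (f x) := rfl
    rw [this]
    rw [div_eq_mul_inv] at h2
    linarith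
  -- integrate
  have hconst : IntegrableOn (fun _ : X => Real.log c + 1) E μ := integrableOn_const haT
  have hlhs_int : IntegrableOn (fun x => Real.log c + 1 - c * (f x)⁻¹) E μ :=
    hconst.sub (hinvint.const_mul c)
  have hmono : ∫ x in E, (Real.log c + 1 - c * (f x)⁻¹) ∂μ ≤ ∫ x in E, llr μ ν x ∂μ := by
    apply setIntegral_mono_ae_restrict hlhs_int hint.integrableOn
    exact ae_restrict_of_ae hpt
  have hcalc : ∫ x in E, (Real.log c + 1 - c * (f x)⁻¹) ∂μ
      = (Real.log c + 1) * a - c * ∫ x in E, (f x)⁻¹ ∂μ := by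
    rw [integral_sub hconst (hinvint.const_mul c), setIntegral_const, integral_const_mul]
    simp [hadef, smul_eq_mul, mul_comm, Measure.real]
  have : a * Real.log c ≤ ∫ x in E, llr μ ν x ∂μ := by
    have h3 : c * ∫ x in E, (f x)⁻¹ ∂μ ≤ c * b :=
      mul_le_mul_of_nonneg_left hinvle hcpos.le
    have h4 : c * b = a := by rw [hcdef, div_mul_cancel₀ a hbpos.ne']
    nlinarith [hmono, hcalc]
  simpa [mul_comm] using this

end klcell


section lambdabound

lemma coord_le {n : ℕ} (y : Hn n) (i : Fin n) : ‖y i‖ ≤ ‖y‖ := by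
  have h1 : ‖y i‖ ^ 2 ≤ ∑ j, ‖y j‖ ^ 2 :=
    Finset.single_le_sum (f := fun j => ‖y j‖ ^ 2) (fun j _ => by positivity)
      (Finset.mem_univ i)
  have h2 : ‖y‖ = Real.sqrt (∑ j, ‖y j‖ ^ 2) := by
    rw [EuclideanSpace.norm_eq]
  calc ‖y i‖ = Real.sqrt (‖y i‖ ^ 2) := by
        rw [Real.sqrt_sq (norm_nonneg _)]
    _ ≤ Real.sqrt (∑ j, ‖y j‖ ^ 2) := Real.sqrt_le_sqrt h1
    _ = ‖y‖ := h2.symm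

lemma gfun_bound {n : ℕ} (x : Sph n) (i k : Fin n) :
    ‖(x : Hn n) i * (starRingEnd ℂ) ((x : Hn n) k)‖ ≤ 1 := by
  have hx : ‖(x : Hn n)‖ = 1 := norm_eq_of_mem_sphere x
  rw [norm_mul]
  calc ‖(x : Hn n) i‖ * ‖(starRingEnd ℂ) ((x : Hn n) k)‖
      ≤ 1 * 1 := by
        apply mul_le_mul _ _ (norm_nonneg _) zero_le_one
        · calc ‖(x : Hn n) i‖ ≤ ‖(x : Hn n)‖ := coord_le _ i
            _ = 1 := hx
        · rw [RCLike.norm_conj]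
          calc ‖(x : Hn n) k‖ ≤ ‖(x : Hn n)‖ := coord_le _ k
            _ = 1 := hx
    _ = 1 := by ring

lemma gfun_lip {n : ℕ} (φ x : Hn n) (hφ : ‖φ‖ ≤ 1) (hx : ‖x‖ ≤ 1) (i k : Fin n) :
    ‖φ i * (starRingEnd ℂ) (φ k) - x i * (starRingEnd ℂ) (x k)‖ ≤ 2 * ‖φ - x‖ := by
  have key : φ i * (starRingEnd ℂ) (φ k) - x i * (starRingEnd ℂ) (x k)
      = (φ i - x i) * (starRingEnd ℂ) (φ k) + x i * ((starRingEnd ℂ) (φ k) - (starRingEnd ℂ) (x k)) := by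
    ring
  rw [key]
  have hd : ∀ j : Fin n, ‖φ j - x j‖ ≤ ‖φ - x‖ := by
    intro j
    have : (φ - x) j = φ j - x j := rfl
    calc ‖φ j - x j‖ = ‖(φ - x) j‖ := by rw [this]
      _ ≤ ‖φ - x‖ := coord_le _ j
  calc ‖(φ i - x i) * (starRingEnd ℂ) (φ k) + x i * ((starRingEnd ℂ) (φ k) - (starRingEnd ℂ) (x k))‖
      ≤ ‖(φ i - x i) * (starRingEnd ℂ) (φ k)‖ + ‖x i * ((starRingEnd ℂ) (φ k) - (starRingEnd ℂ) (x k))‖ :=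
        norm_add_le _ _
    _ ≤ ‖φ - x‖ * 1 + 1 * ‖φ - x‖ := by
        apply add_le_add
        · rw [norm_mul]
          apply mul_le_mul (hd i) _ (norm_nonneg _) (norm_nonneg _)
          rw [RCLike.norm_conj]
          exact (coord_le φ k).trans hφ
        · rw [norm_mul]
          apply mul_le_mul ((coord_le x i).trans hx) _ (norm_nonneg _) zero_le_one
          rw [← map_sub, RCLike.norm_conj]
          exact hd k
    _ = 2 * ‖φ - x‖ := by ring

lemma gcont {n : ℕ} (i k : Fin n) :
    Continuous (fun x : Sph n => (x : Hn n) i * (starRingEnd ℂ) ((x : Hn n) k)) := by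
  have h1 : Continuous (fun x : Sph n => (x : Hn n) i) :=
    (EuclideanSpace.proj i).continuous.comp continuous_subtype_val
  have h2 : Continuous (fun x : Sph n => (starRingEnd ℂ) ((x : Hn n) k)) :=
    continuous_star.comp ((EuclideanSpace.proj k).continuous.comp continuous_subtype_val)
  exact h1.mul h2

lemma gintegrable {n : ℕ} (μ : Measure (Sph n)) [IsFiniteMeasure μ] (i k : Fin n) :
    Integrable (fun x : Sph n => (x : Hn n) i * (starRingEnd ℂ) ((x : Hn n) k)) μ := by
  apply Integrable.mono' (integrable_const (1 : ℝ)) (gcont i k).aestronglyMeasurable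
  exact Filter.Eventually.of_forall fun x => gfun_bound x i k

lemma lambda_entry_bound {n m : ℕ} (μ : Measure (Sph n)) [IsProbabilityMeasure μ]
    (ψ : Fin m → Sph n) (E : Fin m → Set (Sph n)) (hEm : ∀ j, MeasurableSet (E j))
    (hdisj : Pairwise (Function.onFun Disjoint E)) (hcover : ⋃ j, E j = Set.univ)
    (δ : ℝ) (hδ : 0 ≤ δ) (hEδ : ∀ j, ∀ x ∈ E j, dist x (ψ j) ≤ δ) (i k : Fin n) :
    ‖(Lambda (∑ j, μ (E j) • Measure.dirac (ψ j)) - Lambda μ) i k‖ ≤ 2 * δ := by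
  set g : Sph n → ℂ := fun x => (x : Hn n) i * (starRingEnd ℂ) ((x : Hn n) k) with hg
  have hgi : Integrable g μ := gintegrable μ i k
  have h1 : (Lambda (∑ j, μ (E j) • Measure.dirac (ψ j))) i k
      = ∑ j, (μ (E j)).toReal • g (ψ j) :=
    integral_sum_smul_dirac _ (fun j => measure_ne_top μ _) ψ g (gcont i k).stronglyMeasurable
  have h2 : (Lambda μ) i k = ∑ j, ∫ x in E j, g x ∂μ := by
    have : (Lambda μ) i k = ∫ x, g x ∂μ := rfl
    rw [this, ← setIntegral_univ, ← hcover]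
    exact integral_iUnion_fintype hEm hdisj fun j => hgi.integrableOn
  have hsub : (Lambda (∑ j, μ (E j) • Measure.dirac (ψ j)) - Lambda μ) i k
      = ∑ j, ((μ (E j)).toReal • g (ψ j) - ∫ x in E j, g x ∂μ) := by
    have : (Lambda (∑ j, μ (E j) • Measure.dirac (ψ j)) - Lambda μ) i k
        = (Lambda (∑ j, μ (E j) • Measure.dirac (ψ j))) i k - (Lambda μ) i k := rfl
    rw [this, h1, h2, ← Finset.sum_sub_distrib]
  rw [hsub]
  have hterm : ∀ j, ‖(μ (E j)).toReal • g (ψ j) - ∫ x in E j, g x ∂μ‖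
      ≤ 2 * δ * (μ (E j)).toReal := by
    intro j
    have hconst : (μ (E j)).toReal • g (ψ j) = ∫ _x in E j, g (ψ j) ∂μ := by
      rw [setIntegral_const]; rfl
    rw [hconst, ← integral_sub (integrableOn_const (C := g (ψ j)) (measure_ne_top μ _) enorm_ne_top) hgi.integrableOn]
    apply norm_setIntegral_le_of_norm_le_const (measure_lt_top μ _)
    intro x hx
    have hφ : ‖((ψ j : Sph n) : Hn n)‖ ≤ 1 := le_of_eq (norm_eq_of_mem_sphere (ψ j))
    have hx1 : ‖(x : Hn n)‖ ≤ 1 := le_of_eq (norm_eq_of_mem_sphere x)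
    calc ‖g (ψ j) - g x‖ ≤ 2 * ‖((ψ j : Sph n) : Hn n) - (x : Hn n)‖ :=
          gfun_lip _ _ hφ hx1 i k
      _ = 2 * dist x (ψ j) := by
          rw [Subtype.dist_eq, dist_eq_norm, norm_sub_rev]
      _ ≤ 2 * δ := by
          have := hEδ j x hx
          linarith
  calc ‖∑ j, ((μ (E j)).toReal • g (ψ j) - ∫ x in E j, g x ∂μ)‖
      ≤ ∑ j, ‖(μ (E j)).toReal • g (ψ j) - ∫ x in E j, g x ∂μ‖ := by
        exact norm_sum_le _ _
    _ ≤ ∑ j, 2 * δ * (μ (E j)).toReal := Finset.sum_le_sum fun j _ => hterm j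
    _ = 2 * δ * ∑ j, (μ (E j)).toReal := by rw [Finset.mul_sum]
    _ = 2 * δ * 1 := by
        congr 1
        rw [← ENNReal.toReal_sum (fun j _ => measure_ne_top μ _)]
        have hsum : ∑ j, μ (E j) = μ Set.univ := by
          rw [← hcover, measure_iUnion hdisj hEm, tsum_fintype]
        rw [hsum, measure_univ, ENNReal.toReal_one]
    _ = 2 * δ := by ring

end lambdabound

/-- **Discretization**: any pair of Borel probability measures on the unit sphere can be
replaced by finitely supported measures, supported on a common finite set of unit vectors,
whose realized states are `ε`-close in trace distance and whose KL divergence does not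
increase. -/


theorem stmt15 {n : ℕ} (μ ν : Measure (Sph n))
    [IsProbabilityMeasure μ] [IsProbabilityMeasure ν] (ε : ℝ) (hε : 0 < ε) :
    ∃ (m : ℕ) (ψ : Fin m → Sph n) (a b : Fin m → ℝ),
      (∀ j, 0 ≤ a j) ∧ ∑ j, a j = 1 ∧ (∀ j, 0 ≤ b j) ∧ ∑ j, b j = 1 ∧
      traceDist (Lambda (∑ j, ENNReal.ofReal (a j) • Measure.dirac (ψ j))) (Lambda μ) ≤ ε ∧
      traceDist (Lambda (∑ j, ENNReal.ofReal (b j) • Measure.dirac (ψ j))) (Lambda ν) ≤ ε ∧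
      KLdiv (∑ j, ENNReal.ofReal (a j) • Measure.dirac (ψ j))
        (∑ j, ENNReal.ofReal (b j) • Measure.dirac (ψ j)) ≤ KLdiv μ ν := by
  classical
  set δ : ℝ := ε / (n ^ 2 + 1) with hδdef
  have hn1 : (0:ℝ) < (n:ℝ) ^ 2 + 1 := by positivity
  have hδpos : 0 < δ := by positivity
  -- finite cover of the sphere by δ-balls
  have hcomp : IsCompact (Set.univ : Set (Sph n)) := isCompact_univ
  obtain ⟨t, htcover⟩ := hcomp.elim_finite_subcover (fun y : Sph n => Metric.ball y δ)
    (fun y => Metric.isOpen_ball) (fun x _ => Set.mem_iUnion.2 ⟨x, Metric.mem_ball_self hδpos⟩)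
  set m := t.card with hm
  set ψ : Fin m → Sph n := fun j => (t.equivFin.symm j : Sph n) with hψdef
  have hψinj : Function.Injective ψ :=
    Subtype.coe_injective.comp t.equivFin.symm.injective
  have hψsurj : ∀ y ∈ t, ∃ j, ψ j = y := by
    intro y hy
    exact ⟨t.equivFin ⟨y, hy⟩, by simp [hψdef]⟩
  -- the partition
  set E : Fin m → Set (Sph n) := fun j =>
    Metric.ball (ψ j) δ \ ⋃ (k : Fin m) (_ : k < j), Metric.ball (ψ k) δ with hEdef
  have hEm : ∀ j, MeasurableSet (E j) := fun j =>
    Metric.isOpen_ball.measurableSet.diff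
      (MeasurableSet.iUnion fun k => MeasurableSet.iUnion fun _ =>
        Metric.isOpen_ball.measurableSet)
  have hdisj' : ∀ j k : Fin m, j < k → Disjoint (E j) (E k) := by
    intro j k hjk
    rw [Set.disjoint_left]
    intro x hxj hxk
    have hx1 : x ∈ Metric.ball (ψ j) δ := hxj.1
    exact hxk.2 (Set.mem_iUnion.2 ⟨j, Set.mem_iUnion.2 ⟨hjk, hx1⟩⟩)
  have hdisj : Pairwise (Function.onFun Disjoint E) := by
    intro j k hjk
    rcases lt_or_gt_of_ne hjk with h | h
    · exact hdisj' j k h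
    · exact (hdisj' k j h).symm
  have hcover : ⋃ j, E j = Set.univ := by
    apply Set.eq_univ_of_forall
    intro x
    have hxc : x ∈ ⋃ y ∈ t, Metric.ball y δ := htcover (Set.mem_univ x)
    rw [Set.mem_iUnion₂] at hxc
    obtain ⟨y, hy, hxy⟩ := hxc
    obtain ⟨j₁, hj₁⟩ := hψsurj y hy
    have hF : ((Finset.univ : Finset (Fin m)).filter
        (fun j => x ∈ Metric.ball (ψ j) δ)).Nonempty :=
      ⟨j₁, Finset.mem_filter.2 ⟨Finset.mem_univ _, by rw [hj₁]; exact hxy⟩⟩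
    set j₀ := ((Finset.univ : Finset (Fin m)).filter
      (fun j => x ∈ Metric.ball (ψ j) δ)).min' hF with hj₀def
    have hj₀mem : x ∈ Metric.ball (ψ j₀) δ :=
      (Finset.mem_filter.1 ((Finset.univ.filter _).min'_mem hF)).2
    refine Set.mem_iUnion.2 ⟨j₀, hj₀mem, ?_⟩
    intro hxU
    rw [Set.mem_iUnion] at hxU
    obtain ⟨k, hk⟩ := hxU
    rw [Set.mem_iUnion] at hk
    obtain ⟨hklt, hkball⟩ := hk
    have hle : j₀ ≤ k := by
      rw [hj₀def]
      exact Finset.min'_le ((Finset.univ : Finset (Fin m)).filter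
        (fun j => x ∈ Metric.ball (ψ j) δ)) k
        (Finset.mem_filter.2 ⟨Finset.mem_univ k, hkball⟩)
    exact absurd hklt (not_lt.2 hle)
  have hEδ : ∀ j, ∀ x ∈ E j, dist x (ψ j) ≤ δ := fun j x hx => (le_of_lt hx.1)
  -- the weights
  set a : Fin m → ℝ := fun j => (μ (E j)).toReal with hadef
  set b : Fin m → ℝ := fun j => (ν (E j)).toReal with hbdef
  have hofa : ∀ j, ENNReal.ofReal (a j) = μ (E j) := fun j =>
    ENNReal.ofReal_toReal (measure_ne_top μ _)
  have hofb : ∀ j, ENNReal.ofReal (b j) = ν (E j) := fun j =>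
    ENNReal.ofReal_toReal (measure_ne_top ν _)
  have hμeq : (∑ j, ENNReal.ofReal (a j) • Measure.dirac (ψ j))
      = ∑ j, μ (E j) • Measure.dirac (ψ j) :=
    Finset.sum_congr rfl fun j _ => by rw [hofa]
  have hνeq : (∑ j, ENNReal.ofReal (b j) • Measure.dirac (ψ j))
      = ∑ j, ν (E j) • Measure.dirac (ψ j) :=
    Finset.sum_congr rfl fun j _ => by rw [hofb]
  have hsumμ : ∑ j, μ (E j) = 1 := by
    rw [← measure_univ (μ := μ), ← hcover, measure_iUnion hdisj hEm, tsum_fintype]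
  have hsumν : ∑ j, ν (E j) = 1 := by
    rw [← measure_univ (μ := ν), ← hcover, measure_iUnion hdisj hEm, tsum_fintype]
  have hasum : ∑ j, a j = 1 := by
    rw [hadef, ← ENNReal.toReal_sum (fun j _ => measure_ne_top μ _), hsumμ, ENNReal.toReal_one]
  have hbsum : ∑ j, b j = 1 := by
    rw [hbdef, ← ENNReal.toReal_sum (fun j _ => measure_ne_top ν _), hsumν, ENNReal.toReal_one]
  -- trace distance bound helper
  have htd : ∀ (ρ : Measure (Sph n)) (_ : IsProbabilityMeasure ρ),
      traceDist (Lambda (∑ j, ρ (E j) • Measure.dirac (ψ j))) (Lambda ρ) ≤ ε := by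
    intro ρ hρ
    have hent := fun i k => lambda_entry_bound ρ ψ E hEm hdisj hcover δ hδpos.le hEδ i k
    have h1 := traceDist_le_of_entry_bound
      (Lambda (∑ j, ρ (E j) • Measure.dirac (ψ j))) (Lambda ρ) (2 * δ)
      (by positivity) hent
    calc traceDist (Lambda (∑ j, ρ (E j) • Measure.dirac (ψ j))) (Lambda ρ)
        ≤ (n:ℝ) ^ 2 * (2 * δ) / 2 := h1
      _ = (n:ℝ) ^ 2 * ε / ((n:ℝ) ^ 2 + 1) := by rw [hδdef]; ring
      _ ≤ ε := by
          rw [div_le_iff₀ hn1]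
          nlinarith [hε.le, sq_nonneg (n:ℝ)]
  refine ⟨m, ψ, a, b, fun j => ENNReal.toReal_nonneg, hasum,
    fun j => ENNReal.toReal_nonneg, hbsum, ?_, ?_, ?_⟩
  · rw [hμeq]; exact htd μ inferInstance
  · rw [hνeq]; exact htd ν inferInstance
  -- the KL bound
  by_cases hKL : μ ≪ ν ∧ Integrable (llr μ ν) μ
  case neg =>
    have hT : KLdiv μ ν = (⊤ : EReal) := by rw [KLdiv, if_neg hKL]
    rw [hT]; exact le_top
  obtain ⟨hac, hint⟩ := hKL
  set μ' : Measure (Sph n) := ∑ j, ENNReal.ofReal (a j) • Measure.dirac (ψ j) with hμ'def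
  set ν' : Measure (Sph n) := ∑ j, ENNReal.ofReal (b j) • Measure.dirac (ψ j) with hν'def
  have hμ'univ : μ' Set.univ = 1 := by
    rw [hμ'def, sum_smul_dirac_apply]
    simp only [Measure.dirac_apply, Set.indicator_univ, Pi.one_apply, mul_one]
    rw [Finset.sum_congr rfl fun j _ => hofa j, hsumμ]
  have hν'univ : ν' Set.univ = 1 := by
    rw [hν'def, sum_smul_dirac_apply]
    simp only [Measure.dirac_apply, Set.indicator_univ, Pi.one_apply, mul_one]
    rw [Finset.sum_congr rfl fun j _ => hofb j, hsumν]
  haveI : IsProbabilityMeasure μ' := ⟨hμ'univ⟩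
  haveI : IsProbabilityMeasure ν' := ⟨hν'univ⟩
  have hac' : μ' ≪ ν' := by
    refine Measure.AbsolutelyContinuous.mk fun s hs h0 => ?_
    rw [hν'def, sum_smul_dirac_apply, Finset.sum_eq_zero_iff] at h0
    rw [hμ'def, sum_smul_dirac_apply]
    apply Finset.sum_eq_zero
    intro j hj
    rcases mul_eq_zero.1 (h0 j hj) with hb0 | hd0
    · have hν0 : ν (E j) = 0 := by rwa [hofb j] at hb0
      rw [hofa j, hac hν0, zero_mul]
    · rw [hd0, mul_zero]
  -- value of the rnDeriv at the atoms
  have hrn : ∀ j, μ (E j) ≠ 0 → μ'.rnDeriv ν' (ψ j) = μ (E j) / ν (E j) := by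
    intro j hj
    have hb0 : ν (E j) ≠ 0 := fun h => hj (hac h)
    have hμ's : μ' {ψ j} = μ (E j) := by
      rw [hμ'def, sum_smul_dirac_singleton _ _ hψinj j, hofa]
    have hν's : ν' {ψ j} = ν (E j) := by
      rw [hν'def, sum_smul_dirac_singleton _ _ hψinj j, hofb]
    haveI : μ'.HaveLebesgueDecomposition ν' := Measure.haveLebesgueDecomposition_of_sigmaFinite μ' ν'
    have h1 : ∫⁻ x in {ψ j}, μ'.rnDeriv ν' x ∂ν' = μ' {ψ j} :=
      Measure.setLIntegral_rnDeriv hac' _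
    rw [lintegral_singleton, hν's, hμ's] at h1
    rw [ENNReal.eq_div_iff hb0 (measure_ne_top ν _), mul_comm]
    exact h1
  have hllr' : ∀ j, μ (E j) ≠ 0 → llr μ' ν' (ψ j) = Real.log (a j / b j) := by
    intro j hj
    rw [llr_def]
    simp only
    rw [hrn j hj, ENNReal.toReal_div]
  have hint' : Integrable (llr μ' ν') μ' :=
    integrable_sum_smul_dirac _ (fun j => ENNReal.ofReal_ne_top) ψ _
      (measurable_llr _ _).stronglyMeasurable
  have hI' : ∫ x, llr μ' ν' x ∂μ' = ∑ j, a j * llr μ' ν' (ψ j) := by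
    rw [hμ'def, integral_sum_smul_dirac _ (fun j => ENNReal.ofReal_ne_top) ψ _
      (measurable_llr _ _).stronglyMeasurable]
    exact Finset.sum_congr rfl fun j _ => by
      rw [ENNReal.toReal_ofReal (by rw [hadef]; exact ENNReal.toReal_nonneg), smul_eq_mul]
  have hI : ∫ x, llr μ ν x ∂μ = ∑ j, ∫ x in E j, llr μ ν x ∂μ := by
    rw [← setIntegral_univ, ← hcover]
    exact integral_iUnion_fintype hEm hdisj fun j => hint.integrableOn
  have hterm : ∀ j, a j * llr μ' ν' (ψ j) ≤ ∫ x in E j, llr μ ν x ∂μ := by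
    intro j
    by_cases hj : μ (E j) = 0
    · have ha0 : a j = 0 := by rw [hadef]; simp [hj]
      rw [ha0, zero_mul]
      have : μ.restrict (E j) = 0 := Measure.restrict_eq_zero.2 hj
      rw [this, integral_zero_measure]
    · rw [hllr' j hj]
      exact cell_bound μ ν hac hint (hEm j) hj
  have hKL1 : KLdiv μ' ν' = ((∫ x, llr μ' ν' x ∂μ' : ℝ) : EReal) := by
    rw [KLdiv, if_pos ⟨hac', hint'⟩]
  have hKL2 : KLdiv μ ν = ((∫ x, llr μ ν x ∂μ : ℝ) : EReal) := by
    rw [KLdiv, if_pos ⟨hac, hint⟩]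
  rw [hKL1, hKL2, EReal.coe_le_coe_iff]
  calc ∫ x, llr μ' ν' x ∂μ' = ∑ j, a j * llr μ' ν' (ψ j) := hI'
    _ ≤ ∑ j, ∫ x in E j, llr μ ν x ∂μ := Finset.sum_le_sum fun j _ => hterm j
    _ = ∫ x, llr μ ν x ∂μ := hI.symm

end
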